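/- arXiv:1008.2518 — 5 statements merged into one kernel-verified Lean document; each statement's English description precedes it below -/
import Mathlib

section
/- If R₁ = s/(d μ/(k_d N_d) + (k/k_d) δ b/q) > 1, then the point with x₂* = s/(d + k(N_d δ/μ)(b/q)), y₂* = b/q, v₂* = (N_d δ/μ)(b/q), z₂* = (δ/p)(k_d N_d x₂*/μ - 1) is an equilibrium of the system with all four coordinates strictly positive. Moreover z₂* = (δ/p)(R₁ - 1). -/
/-!
The z-equation forces y = b/q and the v-equation v = (N_d δ/μ) y; the x-equation then gives
x₂ = s/(d + k v₂). Factoring μ/(k_d N_d) out of the denominator of R₁ shows R₁ = k_d N_d x₂/μ,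
so z₂ = (δ/p)(R₁ - 1), which solves the y-equation, is positive exactly when R₁ > 1.
-/

/-- The threshold `R₁`. -/
noncomputable def reproductionNumber (s d k kd Nd δ μ q b : ℝ) : ℝ :=
  s / (d * μ / (kd * Nd) + (k / kd) * δ * (b / q))

theorem reproductionNumber_eq (s d k δ q b : ℝ) {kd Nd μ : ℝ}
    (hkd : kd ≠ 0) (hNd : Nd ≠ 0) (hμ : μ ≠ 0) :
    reproductionNumber s d k kd Nd δ μ q b
      = kd * Nd * (s / (d + k * (Nd * δ / μ) * (b / q))) / μ := by
  have hfactor : d * μ / (kd * Nd) + (k / kd) * δ * (b / q)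
      = μ / (kd * Nd) * (d + k * (Nd * δ / μ) * (b / q)) := by
    field_simp
  rw [reproductionNumber, hfactor, div_mul_eq_div_div_swap, div_div_eq_mul_div, mul_comm]

/-- If R₁ > 1, then E₂ is an equilibrium with all coordinates positive, and
z₂* = (δ/p)(R₁ - 1). -/
theorem E2_is_equilibrium (s d k kd Nd δ μ p q b : ℝ)
    (hs : 0 < s) (hd : 0 < d) (hk : 0 < k) (hkd : 0 < kd) (hNd : 0 < Nd)
    (hδ : 0 < δ) (hμ : 0 < μ) (hp : 0 < p) (hq : 0 < q) (hb : 0 < b)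
    (hR1 : 1 < s / (d * μ / (kd * Nd) + (k / kd) * δ * (b / q))) :
    let x₂ := s / (d + k * (Nd * δ / μ) * (b / q))
    let y₂ := b / q
    let v₂ := (Nd * δ / μ) * (b / q)
    let z₂ := (δ / p) * (kd * Nd * x₂ / μ - 1)
    0 < x₂ ∧ 0 < y₂ ∧ 0 < v₂ ∧ 0 < z₂ ∧
    (0 : ℝ) = s - d * x₂ - k * x₂ * v₂ ∧
    (0 : ℝ) = kd * x₂ * v₂ - δ * y₂ - p * y₂ * z₂ ∧
    (0 : ℝ) = Nd * δ * y₂ - μ * v₂ ∧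
    (0 : ℝ) = q * y₂ * z₂ - b * z₂ ∧
    z₂ = (δ / p) * (s / (d * μ / (kd * Nd) + (k / kd) * δ * (b / q)) - 1) := by
  intro x₂ y₂ v₂ z₂
  have hR : reproductionNumber s d k kd Nd δ μ q b = kd * Nd * x₂ / μ :=
    reproductionNumber_eq s d k δ q b hkd.ne' hNd.ne' hμ.ne'
  have hden : d + k * (Nd * δ / μ) * (b / q) ≠ 0 := by positivity
  have hz : z₂ = (δ / p) * (reproductionNumber s d k kd Nd δ μ q b - 1) := by rw [hR]
  refine ⟨by positivity, by positivity, by positivity, ?_, ?_, ?_, ?_, ?_, hz⟩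
  · rw [hz]
    exact mul_pos (by positivity) (sub_pos.mpr hR1)
  all_goals
    simp only [x₂, y₂, v₂, z₂]
    field_simp
    ring
end

section
/- If R₁ > 1, then x₂* - x₁* = (μ/(k_d N_d))(R₁ - 1) > 0, i.e., the uninfected-cell level at the immune-response equilibrium exceeds that at the equilibrium without immune response. -/
/-! Rescaling numerator and denominator of `R₁` by `μ / (k_d N_d)` turns it into `x₂*`, so
`x₂* = x₁* R₁`; hence `x₂* - x₁* = x₁* (R₁ - 1)`, which is positive when `R₁ > 1`. -/

theorem x2_eq_x1_mul_R1 {s d k kd Nd δ μ b q : ℝ}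
    (hkd : kd ≠ 0) (hNd : Nd ≠ 0) (hμ : μ ≠ 0) :
    s / (d + k * (Nd * δ / μ) * (b / q))
      = μ / (kd * Nd) * (s / (d * μ / (kd * Nd) + (k / kd) * δ * (b / q))) := by
  field_simp

theorem x2_gt_x1_general (s d k kd Nd δ μ b q : ℝ)
    (hkd : 0 < kd) (hNd : 0 < Nd) (hμ : 0 < μ)
    (hR1 : 1 < s / (d * μ / (kd * Nd) + (k / kd) * δ * (b / q))) :
    s / (d + k * (Nd * δ / μ) * (b / q)) - μ / (kd * Nd)
      = (μ / (kd * Nd)) * (s / (d * μ / (kd * Nd) + (k / kd) * δ * (b / q)) - 1) ∧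
    0 < s / (d + k * (Nd * δ / μ) * (b / q)) - μ / (kd * Nd) := by
  have hx2 := x2_eq_x1_mul_R1 (s := s) (d := d) (k := k) (δ := δ) (b := b) (q := q)
    hkd.ne' hNd.ne' hμ.ne'
  have hdiff : s / (d + k * (Nd * δ / μ) * (b / q)) - μ / (kd * Nd)
      = (μ / (kd * Nd)) * (s / (d * μ / (kd * Nd) + (k / kd) * δ * (b / q)) - 1) := by
    rw [hx2]; ring
  refine ⟨hdiff, ?_⟩
  rw [hdiff]
  exact mul_pos (by positivity) (sub_pos.mpr hR1)

/-- If R₁ > 1 then x₂* - x₁* = (μ/(k_d N_d))(R₁ - 1) > 0. -/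
theorem x2_gt_x1 (s d k kd Nd δ μ b q : ℝ)
    (hs : 0 < s) (hd : 0 < d) (hk : 0 < k) (hkd : 0 < kd) (hNd : 0 < Nd)
    (hδ : 0 < δ) (hμ : 0 < μ) (hb : 0 < b) (hq : 0 < q)
    (hR1 : 1 < s / (d * μ / (kd * Nd) + (k / kd) * δ * (b / q))) :
    s / (d + k * (Nd * δ / μ) * (b / q)) - μ / (kd * Nd)
      = (μ / (kd * Nd)) * (s / (d * μ / (kd * Nd) + (k / kd) * δ * (b / q)) - 1) ∧
    0 < s / (d + k * (Nd * δ / μ) * (b / q)) - μ / (kd * Nd) :=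
  x2_gt_x1_general s d k kd Nd δ μ b q hkd hNd hμ hR1
end

section
/- If R₁ ≤ 1 and R₀ > 1, then y₁* = (k_d/(kδ))(s - dμ/(k_d N_d)) satisfies 0 < y₁* ≤ b/q. -/
theorem div_lt_of_one_lt_mul_div {α : Type*} [Field α] [LinearOrder α] [IsStrictOrderedRing α]
    {s a c : α} (ha : 0 < a) (hc : 0 < c) (h : 1 < s * c / a) : a / c < s := by
  rw [div_lt_iff₀ hc]
  exact (one_lt_div ha).mp h

theorem y1_pos_le_general (s d k kd Nd δ μ b q : ℝ)
    (hd : 0 < d) (hk : 0 < k) (hkd : 0 < kd) (hNd : 0 < Nd)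
    (hδ : 0 < δ) (hμ : 0 < μ) (hb : 0 < b) (hq : 0 < q)
    (hR1 : s / (d * μ / (kd * Nd) + (k / kd) * δ * (b / q)) ≤ 1)
    (hR0 : 1 < s * kd * Nd / (d * μ)) :
    0 < (kd / (k * δ)) * (s - d * μ / (kd * Nd)) ∧
    (kd / (k * δ)) * (s - d * μ / (kd * Nd)) ≤ b / q := by
  have h_above : d * μ / (kd * Nd) < s :=
    div_lt_of_one_lt_mul_div (by positivity) (by positivity) (by rwa [← mul_assoc])
  have h_below : s ≤ d * μ / (kd * Nd) + (k / kd) * δ * (b / q) :=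
    (div_le_one (by positivity)).mp hR1
  have h_pos : 0 < s - d * μ / (kd * Nd) := sub_pos.mpr h_above
  refine ⟨by positivity, ?_⟩
  calc (kd / (k * δ)) * (s - d * μ / (kd * Nd))
      ≤ (kd / (k * δ)) * ((k / kd) * δ * (b / q)) := by gcongr; linarith
    _ = b / q := by field_simp

/-- If R₁ ≤ 1 < R₀, then 0 < y₁* ≤ b/q. -/
theorem y1_pos_le (s d k kd Nd δ μ b q : ℝ)
    (hs : 0 < s) (hd : 0 < d) (hk : 0 < k) (hkd : 0 < kd) (hNd : 0 < Nd)
    (hδ : 0 < δ) (hμ : 0 < μ) (hb : 0 < b) (hq : 0 < q)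
    (hR1 : s / (d * μ / (kd * Nd) + (k / kd) * δ * (b / q)) ≤ 1)
    (hR0 : 1 < s * kd * Nd / (d * μ)) :
    0 < (kd / (k * δ)) * (s - d * μ / (kd * Nd)) ∧
    (kd / (k * δ)) * (s - d * μ / (kd * Nd)) ≤ b / q :=
  y1_pos_le_general s d k kd Nd δ μ b q hd hk hkd hNd hδ hμ hb hq hR1 hR0
end

section
/- For positive reals x, v and positive equilibrium values x₁, v₁ with s = d x₁ + k x₁ v₁, one has (1 - x₁/x)(s - d x - k x v) = -d x (1 - x₁/x)² + k v₁ x₁ (1 - (x v)/(x₁ v₁) - x₁/x + v/v₁). -/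
theorem lyapunov_x_identity_general (s d k x₁ v₁ x v : ℝ)
    (hx₁ : 0 < x₁) (hv₁ : 0 < v₁) (hx : 0 < x)
    (hs : s = d * x₁ + k * x₁ * v₁) :
    (1 - x₁ / x) * (s - d * x - k * x * v)
      = -(d * x) * (1 - x₁ / x) ^ 2
        + k * v₁ * x₁ * (1 - (x * v) / (x₁ * v₁) - x₁ / x + v / v₁) := by
  subst hs
  field_simp
  ring

/-- Key algebraic identity for the Lyapunov derivative at the infected equilibrium. -/
theorem lyapunov_x_identity (s d k x₁ v₁ x v : ℝ)
    (hx₁ : 0 < x₁) (hv₁ : 0 < v₁) (hx : 0 < x) (hv : 0 < v)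
    (hs : s = d * x₁ + k * x₁ * v₁) :
    (1 - x₁ / x) * (s - d * x - k * x * v)
      = -(d * x) * (1 - x₁ / x) ^ 2
        + k * v₁ * x₁ * (1 - (x * v) / (x₁ * v₁) - x₁ / x + v / v₁) :=
  lyapunov_x_identity_general s d k x₁ v₁ x v hx₁ hv₁ hx hs
end

section
/- Suppose x : [0,∞) → ℝ is continuously differentiable, x(0) ≥ 0, and satisfies x'(t) = s - d x(t) - k x(t) v(t) where s > 0, d, k > 0 and v is continuous and nonnegative. Then x(t) > 0 for all t > 0. -/
open Set

section PositiveAtZeros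

variable {f f' : ℝ → ℝ} {a : ℝ}

/-- Comparison with the barrier `0`: `-f` can never cross it, since it is strictly
decreasing wherever it touches it. -/
theorem nonneg_of_hasDerivAt_pos_of_eq_zero (hf : ∀ t, a ≤ t → HasDerivAt f (f' t) t)
    (ha : 0 ≤ f a) (hzero : ∀ t, a ≤ t → f t = 0 → 0 < f' t) :
    ∀ t, a ≤ t → 0 ≤ f t := by
  intro t hat
  have hcont : ContinuousOn (fun u => -f u) (Icc a t) := fun u hu =>
    (hf u hu.1).continuousAt.neg.continuousWithinAt
  have hneg := image_le_of_deriv_right_lt_deriv_boundary (B := fun _ => 0) (B' := fun _ => 0)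
    hcont (fun u hu => (hf u hu.1).neg.hasDerivWithinAt) (by simpa using ha)
    (fun _ => hasDerivAt_const _ _)
    (fun u hu hfu => neg_neg_of_pos (hzero u hu.1 (neg_eq_zero.mp hfu)))
    ⟨hat, le_rfl⟩
  simpa using hneg

/-- A zero after `a` would be an interior minimum, where the derivative vanishes. -/
theorem pos_of_hasDerivAt_pos_of_eq_zero (hf : ∀ t, a ≤ t → HasDerivAt f (f' t) t)
    (ha : 0 ≤ f a) (hzero : ∀ t, a ≤ t → f t = 0 → 0 < f' t) :
    ∀ t, a < t → 0 < f t := by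
  intro t hat
  have hnonneg := nonneg_of_hasDerivAt_pos_of_eq_zero hf ha hzero
  refine (hnonneg t hat.le).lt_of_ne' fun hft => ?_
  have hmin : IsLocalMin f t :=
    Filter.mem_of_superset (Ioi_mem_nhds hat) fun u hu => by
      simpa [hft] using hnonneg u (le_of_lt hu)
  exact (hzero t hat.le hft).ne' (hmin.hasDerivAt_eq_zero (hf t hat.le))

end PositiveAtZeros

theorem x_positive_general (s d k : ℝ) (hs : 0 < s)
    (x v : ℝ → ℝ)
    (hx0 : 0 ≤ x 0)
    (hx : ∀ t, 0 ≤ t → HasDerivAt x (s - d * x t - k * x t * v t) t) :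
    ∀ t, 0 < t → 0 < x t :=
  pos_of_hasDerivAt_pos_of_eq_zero hx hx0 fun t _ hxt => by simpa [hxt] using hs

/-- Positivity of the uninfected-cell component. -/
theorem x_positive (s d k : ℝ) (hs : 0 < s) (hd : 0 < d) (hk : 0 < k)
    (x v : ℝ → ℝ) (hv : Continuous v) (hvnn : ∀ t, 0 ≤ v t)
    (hx0 : 0 ≤ x 0)
    (hx : ∀ t, 0 ≤ t → HasDerivAt x (s - d * x t - k * x t * v t) t) :
    ∀ t, 0 < t → 0 < x t :=
  x_positive_general s d k hs x v hx0 hx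
end
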